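/- arXiv:1705.08365 — 7 statements merged into one kernel-verified Lean document; each statement's English description precedes it below -/
import Mathlib

section
/- For positive integers p and f with p ≥ 5 and 2p − 1 ≤ f ≤ p(p−1)/2, we have (1 + 2(f−p)/(f+p))^(⌈p/2⌉+1) > f − p + 1. -/
/-! Write `β(f) = 1 + 2(f - p)/(f + p)` and `n = ⌈p/2⌉ + 1`, so `p + 2 ≤ 2n`. At `f = 2p - 1` the
claim reads `p < β(2p - 1)^n` with `β(2p - 1) = (5p - 3)/(3p - 1) ≥ 11/7`, and `p < (11/7)^n`
already. Passing from `f` to `f + 1` multiplies `β^n` by `(1 + r)^n ≥ 1 + n r`, where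
`r = 4p/((3f - p)(f + p + 1))`, while the left side `f - p + 1` grows by the factor
`1 + 1/(f - p + 1)`. The first factor wins as soon as `(3f - p)(f + p + 1) ≤ 4pn(f - p + 1)`; the
difference of the two sides is concave in `f` and nonnegative at both ends of the range
`2p - 1 ≤ f < p(p - 1)/2`, hence on all of it. -/

lemma two_mul_sub_two_lt_pow {b : ℝ} (hb : 11 / 7 ≤ b) {n : ℕ} (hn : 4 ≤ n) :
    2 * (n : ℝ) - 2 < b ^ n := by
  induction n, hn using Nat.le_induction with
  | base =>
    calc 2 * ((4 : ℕ) : ℝ) - 2 < (11 / 7) ^ 4 := by norm_num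
      _ ≤ b ^ 4 := by gcongr
  | succ n hn ih =>
    have hn' : (4 : ℝ) ≤ n := by exact_mod_cast hn
    calc 2 * ((n + 1 : ℕ) : ℝ) - 2 ≤ 11 / 7 * (2 * n - 2) := by push_cast; linarith
      _ < b * b ^ n := mul_lt_mul' hb ih (by linarith) (by linarith)
      _ = b ^ (n + 1) := (pow_succ' b n).symm

lemma add_one_lt_mul_one_add_pow {x b r : ℝ} {n : ℕ} (hx : 0 < x) (hr : 0 ≤ r)
    (h : x < b ^ n) (hstep : 1 ≤ n * r * x) : x + 1 < (b * (1 + r)) ^ n := by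
  have hbern : 1 + n * r ≤ (1 + r) ^ n := one_add_mul_le_pow (by linarith) n
  calc x + 1 ≤ x * (1 + n * r) := by nlinarith
    _ < b ^ n * (1 + n * r) := by gcongr
    _ ≤ b ^ n * (1 + r) ^ n := by gcongr; exact (hx.trans h).le
    _ = (b * (1 + r)) ^ n := (mul_pow b _ n).symm

lemma one_add_two_mul_sub_div_add_one {p f : ℝ} (hfp : 0 < f + p) (h3 : 0 < 3 * f - p) :
    1 + 2 * (f + 1 - p) / (f + 1 + p) =
      (1 + 2 * (f - p) / (f + p)) * (1 + 4 * p / ((3 * f - p) * (f + p + 1))) := by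
  have hfp1 : f + 1 + p ≠ 0 := by linarith
  have hfp1' : f + p + 1 ≠ 0 := by linarith
  rw [one_add_div hfp1, one_add_div hfp.ne', one_add_div (mul_ne_zero h3.ne' hfp1'),
    div_mul_div_comm, div_eq_div_iff hfp1 (by positivity)]
  ring

lemma three_mul_sub_mul_le_four_mul_mul {p f n : ℝ} (hp : 5 ≤ p) (hn : p + 2 ≤ 2 * n)
    (hf1 : 2 * p - 1 ≤ f) (hf2 : 2 * f + 2 ≤ p * (p - 1)) :
    (3 * f - p) * (f + p + 1) ≤ 4 * p * n * (f - p + 1) := by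
  have hN : 2 * p * (p + 2) * (f - p + 1) ≤ 4 * p * n * (f - p + 1) := by
    have : 0 ≤ 2 * p * (f - p + 1) := by nlinarith
    nlinarith
  nlinarith [mul_nonneg (by linarith : 0 ≤ f - (2 * p - 1)) (by linarith : 0 ≤ p * (p - 1) - 2 * f - 2)]

lemma sub_add_one_lt_one_add_two_mul_sub_div_pow {p n f : ℕ} (hp : 5 ≤ p) (hn : p + 2 ≤ 2 * n)
    (hf1 : 2 * p - 1 ≤ f) (hf2 : f ≤ p.choose 2) :
    (f : ℝ) - p + 1 < (1 + 2 * ((f : ℝ) - p) / ((f : ℝ) + p)) ^ n := by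
  have hP : (5 : ℝ) ≤ p := by exact_mod_cast hp
  have hN : (p : ℝ) + 2 ≤ 2 * n := by exact_mod_cast hn
  have hcast : ((2 * p - 1 : ℕ) : ℝ) = 2 * p - 1 := by
    rw [Nat.cast_sub (by omega)]; push_cast; ring
  induction f, hf1 using Nat.le_induction with
  | base =>
    have hbase : 11 / 7 ≤ 1 + 2 * ((2 * p - 1 : ℝ) - p) / ((2 * p - 1 : ℝ) + p) := by
      rw [← sub_le_iff_le_add', le_div_iff₀ (by linarith)]
      linarith
    rw [hcast]
    calc (2 * p - 1 : ℝ) - p + 1 ≤ 2 * n - 2 := by linarith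
      _ < _ := two_mul_sub_two_lt_pow hbase (by omega)
  | succ f hf ih =>
    have hF : 2 * (p : ℝ) - 1 ≤ f := by rw [← hcast]; exact_mod_cast hf
    have hF2 : 2 * (f : ℝ) + 2 ≤ p * (p - 1) := by
      have : ((f + 1 : ℕ) : ℝ) ≤ p.choose 2 := by exact_mod_cast hf2
      rw [Nat.cast_choose_two] at this
      push_cast at this
      linarith
    push_cast
    rw [one_add_two_mul_sub_div_add_one (by linarith) (by linarith),
      show (f : ℝ) + 1 - p + 1 = (f - p + 1) + 1 by ring]
    have hden : 0 < (3 * f - p) * (f + p + 1 : ℝ) := by nlinarith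
    refine add_one_lt_mul_one_add_pow (by linarith) (by positivity) (ih (by omega)) ?_
    rw [mul_div_assoc', div_mul_eq_mul_div, le_div_iff₀ hden, one_mul]
    linarith [three_mul_sub_mul_le_four_mul_mul hP hN hF hF2]

theorem stmt_0_general (p f : ℕ) (hp : 5 ≤ p)
    (hf1 : 2 * p - 1 ≤ f) (hf2 : f ≤ p.choose 2) :
    ((f : ℝ) - p + 1) < (1 + 2 * ((f : ℝ) - p) / ((f : ℝ) + p)) ^ (⌈(p : ℝ) / 2⌉₊ + 1) := by
  have hceil : p ≤ 2 * ⌈(p : ℝ) / 2⌉₊ := by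
    have := Nat.le_ceil ((p : ℝ) / 2)
    exact_mod_cast (by linarith : (p : ℝ) ≤ 2 * ⌈(p : ℝ) / 2⌉₊)
  exact sub_add_one_lt_one_add_two_mul_sub_div_pow hp (by omega) hf1 hf2

/-- For positive integers `p` and `f` with `p ≥ 5` and `2p - 1 ≤ f ≤ p(p-1)/2`,
`(1 + 2(f-p)/(f+p))^(⌈p/2⌉+1) > f - p + 1`. -/
theorem stmt_0 (p f : ℕ) (hp0 : 0 < p) (hf0 : 0 < f) (hp : 5 ≤ p)
    (hf1 : 2 * p - 1 ≤ f) (hf2 : f ≤ p.choose 2) :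
    ((f : ℝ) - p + 1) < (1 + 2 * ((f : ℝ) - p) / ((f : ℝ) + p)) ^ (⌈(p : ℝ) / 2⌉₊ + 1) :=
  stmt_0_general p f hp hf1 hf2
end

section
/- If G is a graph of order n, then for every p ∈ [n], the zero forcing number Z(G) is at least δ_p(G), where δ_p(G) = min{|N_G(X)| : X ⊆ V(G), |X| = p}. -/
open scoped Classical

variable {V : Type*}

/-- `Z` is a zero forcing set of `G`: the vertices outside `Z` can be listed `u 0, …, u (k-1)`
so that each `u i` is the unique neighbor of some vertex `v i` of `Z ∪ {u j : j < i}`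
outside `Z ∪ {u j : j < i}`. -/
def IsZeroForcingSet [Fintype V] (G : SimpleGraph V) (Z : Finset V) : Prop :=
  ∃ (k : ℕ) (u : Fin k → V) (v : Fin k → V),
    Function.Injective u ∧ (∀ w, w ∉ Z ↔ ∃ i, u i = w) ∧
    ∀ i : Fin k,
      (v i ∈ Z ∨ ∃ j : Fin k, j < i ∧ u j = v i) ∧
      G.Adj (v i) (u i) ∧
      ∀ w, G.Adj (v i) w → w ∉ Z → (∀ j : Fin k, j < i → u j ≠ w) → w = u i

/-- The zero forcing number of `G`: minimum size of a zero forcing set. -/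
noncomputable def zeroForcingNumber [Fintype V] (G : SimpleGraph V) : ℕ :=
  sInf {n | ∃ Z : Finset V, IsZeroForcingSet G Z ∧ Z.card = n}

/-- The external neighborhood of a set of vertices. -/
def extNbhd (G : SimpleGraph V) (X : Set V) : Set V :=
  {v | v ∉ X ∧ ∃ x ∈ X, G.Adj v x}

/-- `δ_p(G)`: the minimum of `|N_G(X)|` over all `p`-element vertex sets `X`. -/
noncomputable def deltaP [Fintype V] (G : SimpleGraph V) (p : ℕ) : ℕ :=
  sInf {m | ∃ X : Finset V, X.card = p ∧ (extNbhd G (↑X : Set V)).ncard = m}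

/-!
Fix a zero forcing set `Z` with chronological list of forces `v i → u i`, `i < k`, and let
`B_t = Z ∪ {u i : i < t}` be the colored set after `t` forces. The vertices `v i` with `i < t`
are distinct, lie in `B_t`, and have no neighbor outside `B_t`, since at time `i` the only
uncolored neighbor of `v i` was `u i`. Hence `N(V ∖ B_t) ⊆ B_t ∖ {v i : i < t}`, a set of
size `|Z| + t - t = |Z|`. Taking `t = k - p` gives a `p`-set `V ∖ B_t` with at most `|Z|` external
neighbors; if `p > k`, then any `p`-set has at most `n - p < n - k = |Z|` external neighbors.
-/

section Chronology

variable {G : SimpleGraph V} {Z : Finset V} {k : ℕ} {u v : Fin k → V}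

structure IsForcingChronology (G : SimpleGraph V) (Z : Finset V) (u v : Fin k → V) : Prop where
  injective_forced : Function.Injective u
  not_mem_iff : ∀ w, w ∉ Z ↔ ∃ i, u i = w
  forcer_mem : ∀ i, v i ∈ Z ∨ ∃ j, j < i ∧ u j = v i
  adj : ∀ i, G.Adj (v i) (u i)
  eq_forced : ∀ i w, G.Adj (v i) w → w ∉ Z → (∀ j, j < i → u j ≠ w) → w = u i

theorem IsZeroForcingSet.exists_isForcingChronology [Fintype V] (hZ : IsZeroForcingSet G Z) :
    ∃ (k : ℕ) (u v : Fin k → V), IsForcingChronology G Z u v := by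
  obtain ⟨k, u, v, hu, hZu, hforce⟩ := hZ
  exact ⟨k, u, v, hu, hZu, fun i => (hforce i).1, fun i => (hforce i).2.1,
    fun i => (hforce i).2.2⟩

noncomputable def coloredAfter (Z : Finset V) (u : Fin k → V) (t : ℕ) : Finset V :=
  Z ∪ ({i | (i : ℕ) < t} : Finset (Fin k)).image u

theorem apply_mem_coloredAfter {i : Fin k} {t : ℕ} (hi : (i : ℕ) < t) :
    u i ∈ coloredAfter Z u t := by
  simp only [coloredAfter, Finset.mem_union, Finset.mem_image, Finset.mem_filter,
    Finset.mem_univ, true_and]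
  exact Or.inr ⟨i, hi, rfl⟩

namespace IsForcingChronology

variable (h : IsForcingChronology G Z u v)
include h

theorem forced_not_mem (i : Fin k) : u i ∉ Z :=
  (h.not_mem_iff _).2 ⟨i, rfl⟩

theorem card_coloredAfter {t : ℕ} (ht : t ≤ k) : (coloredAfter Z u t).card = Z.card + t := by
  have hdisj : Disjoint Z (({i | (i : ℕ) < t} : Finset (Fin k)).image u) := by
    simp only [Finset.disjoint_right, Finset.mem_image]
    rintro _ ⟨i, -, rfl⟩
    exact h.forced_not_mem i
  rw [coloredAfter, Finset.card_union_of_disjoint hdisj,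
    Finset.card_image_of_injective _ h.injective_forced, Fin.card_filter_val_lt,
    min_eq_right ht]

theorem coloredAfter_length_eq_univ [Fintype V] : coloredAfter Z u k = Finset.univ := by
  ext w
  simp only [Finset.mem_univ, iff_true]
  by_cases hw : w ∈ Z
  · exact Finset.mem_union_left _ hw
  · obtain ⟨i, rfl⟩ := (h.not_mem_iff w).1 hw
    exact apply_mem_coloredAfter i.isLt

theorem card_add_length [Fintype V] : Z.card + k = Fintype.card V := by
  rw [← h.card_coloredAfter le_rfl, h.coloredAfter_length_eq_univ, Finset.card_univ]

-- Otherwise `u j` would be a second uncolored neighbor of `v i` when `v i` forces `u i`.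
theorem forcer_ne_of_lt {i j : Fin k} (hij : i < j) : v i ≠ v j := fun hv =>
  hij.ne' <| h.injective_forced <|
    h.eq_forced i (u j) (hv ▸ h.adj j) (h.forced_not_mem j)
      fun _ hl hlj => (h.injective_forced hlj ▸ hl.trans hij).false

theorem injective_forcer : Function.Injective v :=
  Function.Injective.of_lt_imp_ne fun _ _ => h.forcer_ne_of_lt

theorem forcer_mem_coloredAfter {i : Fin k} {t : ℕ} (hi : (i : ℕ) < t) :
    v i ∈ coloredAfter Z u t := by
  rcases h.forcer_mem i with hZ | ⟨j, hji, hj⟩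
  · exact Finset.mem_union_left _ hZ
  · exact hj ▸ apply_mem_coloredAfter (Fin.lt_def.1 hji |>.trans hi)

theorem mem_coloredAfter_of_adj_forcer {i : Fin k} {t : ℕ} (hi : (i : ℕ) < t) {w : V}
    (hw : G.Adj (v i) w) : w ∈ coloredAfter Z u t := by
  by_contra hwt
  have hwZ : w ∉ Z := fun hZ => hwt (Finset.mem_union_left _ hZ)
  have hj : ∀ j, j < i → u j ≠ w := fun j hji hj =>
    hwt (hj ▸ apply_mem_coloredAfter (Fin.lt_def.1 hji |>.trans hi))
  exact hwt (h.eq_forced i w hw hwZ hj ▸ apply_mem_coloredAfter hi)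

theorem extNbhd_compl_coloredAfter_subset [Fintype V] (t : ℕ) :
    extNbhd G ↑(coloredAfter Z u t)ᶜ ⊆
      ↑(coloredAfter Z u t \ ({i | (i : ℕ) < t} : Finset (Fin k)).image v) := by
  rintro y ⟨hy, x, hx, hyx⟩
  simp only [Finset.coe_compl, Finset.mem_coe, Set.mem_compl_iff, not_not] at hy hx
  simp only [Finset.coe_sdiff, Set.mem_sdiff, Finset.mem_coe, Finset.mem_image,
    Finset.mem_filter, Finset.mem_univ, true_and, not_exists, not_and]
  exact ⟨hy, fun i hi hvi => hx (h.mem_coloredAfter_of_adj_forcer hi (hvi ▸ hyx))⟩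

theorem ncard_extNbhd_compl_coloredAfter_le [Fintype V] {t : ℕ} (ht : t ≤ k) :
    (extNbhd G ↑(coloredAfter Z u t)ᶜ).ncard ≤ Z.card := by
  have hforcers : ({i | (i : ℕ) < t} : Finset (Fin k)).image v ⊆ coloredAfter Z u t := by
    rintro _ hw
    obtain ⟨i, hi, rfl⟩ := Finset.mem_image.1 hw
    exact h.forcer_mem_coloredAfter (Finset.mem_filter.1 hi).2
  calc (extNbhd G ↑(coloredAfter Z u t)ᶜ).ncard
      ≤ (coloredAfter Z u t \ ({i | (i : ℕ) < t} : Finset (Fin k)).image v).card := by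
        rw [← Set.ncard_coe_finset]
        exact Set.ncard_le_ncard (h.extNbhd_compl_coloredAfter_subset t) (Finset.finite_toSet _)
    _ = Z.card := by
        rw [Finset.card_sdiff_of_subset hforcers, h.card_coloredAfter ht,
          Finset.card_image_of_injective _ h.injective_forcer, Fin.card_filter_val_lt,
          min_eq_right ht, Nat.add_sub_cancel]

end IsForcingChronology

end Chronology

theorem ncard_extNbhd_le [Fintype V] (G : SimpleGraph V) (X : Finset V) :
    (extNbhd G ↑X).ncard ≤ Fintype.card V - X.card := by
  rw [← Finset.card_compl, ← Set.ncard_coe_finset]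
  exact Set.ncard_le_ncard (fun y hy => by simpa using hy.1) (Finset.finite_toSet _)

theorem deltaP_le_ncard_extNbhd [Fintype V] (G : SimpleGraph V) (X : Finset V) :
    deltaP G X.card ≤ (extNbhd G ↑X).ncard :=
  Nat.sInf_le ⟨X, rfl, rfl⟩

theorem IsZeroForcingSet.deltaP_le_card [Fintype V] {G : SimpleGraph V} {Z : Finset V}
    (hZ : IsZeroForcingSet G Z) {p : ℕ} (hpn : p ≤ Fintype.card V) :
    deltaP G p ≤ Z.card := by
  obtain ⟨k, u, v, h⟩ := hZ.exists_isForcingChronology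
  have hZk := h.card_add_length
  by_cases hpk : p ≤ k
  · have hX : (coloredAfter Z u (k - p))ᶜ.card = p := by
      rw [Finset.card_compl, h.card_coloredAfter (Nat.sub_le k p)]
      omega
    exact hX ▸ (deltaP_le_ncard_extNbhd G _).trans
      (h.ncard_extNbhd_compl_coloredAfter_le (Nat.sub_le k p))
  · obtain ⟨X, -, hX⟩ := Finset.exists_subset_card_eq (s := (Finset.univ : Finset V)) (n := p)
      (by simpa using hpn)
    calc deltaP G p ≤ (extNbhd G ↑X).ncard := hX ▸ deltaP_le_ncard_extNbhd G X
      _ ≤ Fintype.card V - X.card := ncard_extNbhd_le G X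
      _ ≤ Z.card := by omega

theorem isZeroForcingSet_univ [Fintype V] (G : SimpleGraph V) :
    IsZeroForcingSet G Finset.univ :=
  ⟨0, Fin.elim0, Fin.elim0, fun i => i.elim0, by simp, fun i => i.elim0⟩

theorem exists_isZeroForcingSet_card_eq_zeroForcingNumber [Fintype V] (G : SimpleGraph V) :
    ∃ Z : Finset V, IsZeroForcingSet G Z ∧ Z.card = zeroForcingNumber G :=
  Nat.sInf_mem (s := {n | ∃ Z : Finset V, IsZeroForcingSet G Z ∧ Z.card = n})
    ⟨_, Finset.univ, isZeroForcingSet_univ G, rfl⟩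

theorem stmt_2_general [Fintype V] (G : SimpleGraph V) (p : ℕ)
    (hpn : p ≤ Fintype.card V) :
    deltaP G p ≤ zeroForcingNumber G := by
  obtain ⟨Z, hZ, hZcard⟩ := exists_isZeroForcingSet_card_eq_zeroForcingNumber G
  exact hZcard ▸ hZ.deltaP_le_card hpn

/-- If `G` is a graph of order `n`, then `Z(G) ≥ δ_p(G)` for every `p ∈ [n]`. -/
theorem stmt_2 [Fintype V] (G : SimpleGraph V) (p : ℕ)
    (hp1 : 1 ≤ p) (hpn : p ≤ Fintype.card V) :
    deltaP G p ≤ zeroForcingNumber G :=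
  stmt_2_general G p hpn
end

section
/- If G is a graph with minimum degree δ(G) ≥ 1, then Z(G) ≥ δ(G). -/
open scoped Classical

variable {V : Type*}

theorem IsZeroForcingSet.exists_mem_forall_adj_notMem_eq [Fintype V] {G : SimpleGraph V}
    {Z : Finset V} (hZ : IsZeroForcingSet G Z) {x : V} (hx : x ∉ Z) :
    ∃ v ∈ Z, ∃ u, ∀ w, G.Adj v w → w ∉ Z → w = u := by
  obtain ⟨k, u, v, -, hcover, hforce⟩ := hZ
  obtain ⟨⟨i, hi⟩, -⟩ := (hcover x).1 hx
  let first : Fin k := ⟨0, by omega⟩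
  have no_earlier (j : Fin k) : ¬ j < first := fun hj => Nat.not_lt_zero _ (Fin.lt_def.1 hj)
  obtain ⟨hv, -, hunique⟩ := hforce first
  refine ⟨v first, hv.resolve_right fun ⟨j, hj, _⟩ => no_earlier j hj, u first,
    fun w hw hwZ => ?_⟩
  exact hunique w hw hwZ fun j hj => (no_earlier j hj).elim

namespace SimpleGraph

variable [Fintype V] (G : SimpleGraph V) [DecidableRel G.Adj]

theorem degree_le_card_of_forall_adj_notMem_eq {Z : Finset V} {v u : V} (hv : v ∈ Z)
    (hforce : ∀ w, G.Adj v w → w ∉ Z → w = u) : G.degree v ≤ Z.card := by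
  have hsub : G.neighborFinset v ⊆ insert u (Z.erase v) := by
    intro w hw
    rw [mem_neighborFinset] at hw
    by_cases hwZ : w ∈ Z
    · exact Finset.mem_insert_of_mem (Finset.mem_erase.2 ⟨hw.ne', hwZ⟩)
    · exact Finset.mem_insert.2 (Or.inl (hforce w hw hwZ))
  calc G.degree v ≤ (insert u (Z.erase v)).card := Finset.card_le_card hsub
    _ ≤ (Z.erase v).card + 1 := Finset.card_insert_le _ _
    _ = Z.card := Finset.card_erase_add_one hv

theorem minDegree_le_card_of_isZeroForcingSet {Z : Finset V} (hZ : IsZeroForcingSet G Z) :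
    G.minDegree ≤ Z.card := by
  by_cases hfull : Z = Finset.univ
  · subst hfull
    cases isEmpty_or_nonempty V
    · simp
    · exact G.minDegree_lt_card.le
  · obtain ⟨x, hx⟩ : ∃ x, x ∉ Z := by simpa [Finset.eq_univ_iff_forall] using hfull
    obtain ⟨v, hv, u, hforce⟩ := hZ.exists_mem_forall_adj_notMem_eq hx
    exact (G.minDegree_le_degree v).trans (G.degree_le_card_of_forall_adj_notMem_eq hv hforce)

end SimpleGraph

theorem stmt_3_general [Fintype V] (G : SimpleGraph V) [DecidableRel G.Adj] :
    G.minDegree ≤ zeroForcingNumber G := by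
  refine le_csInf ⟨_, Finset.univ, isZeroForcingSet_univ G, rfl⟩ ?_
  rintro _ ⟨Z, hZ, rfl⟩
  exact G.minDegree_le_card_of_isZeroForcingSet hZ

/-- If `G` has minimum degree at least 1, then `Z(G) ≥ δ(G)`. -/
theorem stmt_3 [Fintype V] (G : SimpleGraph V) [DecidableRel G.Adj]
    (h : 1 ≤ G.minDegree) :
    G.minDegree ≤ zeroForcingNumber G :=
  stmt_3_general G
end

section
/- Let Z be a zero forcing set of a graph G with forcing vertices v_1,…,v_k as above, and let p ≤ k. Then |N_G[{v_1,…,v_p}]| ≤ |Z| + p. -/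
/-!
Each forcing vertex `v i` is coloured before step `i`, and once it has forced `u i` all of its
neighbours are coloured. Hence `N[{v 0, …, v (p-1)}] ⊆ Z ∪ {u 0, …, u (p-1)}`, a set of size
at most `|Z| + p`.
-/

open scoped Classical

variable {V : Type*}

/-- The closed neighborhood of a set of vertices. -/
def closedNbhd (G : SimpleGraph V) (S : Set V) : Set V :=
  S ∪ {w | ∃ x ∈ S, G.Adj x w}

theorem Set.ncard_image_fin_val_lt_le {α : Type*} {k : ℕ} (f : Fin k → α) (p : ℕ) :
    (f '' {j : Fin k | (j : ℕ) < p}).ncard ≤ p :=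
  calc (f '' {j : Fin k | (j : ℕ) < p}).ncard
      ≤ {j : Fin k | (j : ℕ) < p}.ncard := Set.ncard_image_le (Set.toFinite _)
    _ ≤ (Set.Iio p).ncard :=
        Set.ncard_le_ncard_of_injOn Fin.val (fun _ hj => hj) Fin.val_injective.injOn
          (Set.finite_Iio p)
    _ = p := Set.ncard_Iio_nat p

section ZeroForcing

variable {G : SimpleGraph V} {Z : Finset V} {k : ℕ} {u : Fin k → V}

theorem adj_mem_of_forces (hu : Function.Injective u) (huZ : ∀ w, w ∉ Z ↔ ∃ i, u i = w)
    {x : V} {i : Fin k}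
    (hforce : ∀ w, G.Adj x w → w ∉ Z → (∀ j : Fin k, j < i → u j ≠ w) → w = u i)
    {w : V} (hxw : G.Adj x w) : w ∈ (Z : Set V) ∪ u '' Set.Iic i := by
  by_cases hwZ : w ∈ Z
  · exact Or.inl hwZ
  obtain ⟨j, rfl⟩ := (huZ w).1 hwZ
  refine Or.inr ⟨j, Set.mem_Iic.2 (le_of_not_gt fun hij => ?_), rfl⟩
  have hji : u j = u i := hforce _ hxw hwZ fun j' hj' h => (hu h ▸ hj').asymm hij
  exact hij.ne' (hu hji)

theorem closedNbhd_forcers_subset {v : Fin k → V} (hu : Function.Injective u)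
    (huZ : ∀ w, w ∉ Z ↔ ∃ i, u i = w)
    (hv : ∀ i : Fin k, (v i ∈ Z ∨ ∃ j : Fin k, j < i ∧ u j = v i) ∧
      ∀ w, G.Adj (v i) w → w ∉ Z → (∀ j : Fin k, j < i → u j ≠ w) → w = u i)
    (p : ℕ) :
    closedNbhd G (v '' {i : Fin k | (i : ℕ) < p}) ⊆
      (Z : Set V) ∪ u '' {j : Fin k | (j : ℕ) < p} := by
  rintro x (⟨i, hi, rfl⟩ | ⟨y, ⟨i, hi, rfl⟩, hadj⟩)
  · rcases (hv i).1 with hZ | ⟨j, hji, hj⟩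
    · exact Or.inl hZ
    · exact Or.inr ⟨j, Nat.lt_trans hji hi, hj⟩
  · rcases adj_mem_of_forces hu huZ (hv i).2 hadj with hZ | ⟨j, hji, hj⟩
    · exact Or.inl hZ
    · exact Or.inr ⟨j, Nat.lt_of_le_of_lt hji hi, hj⟩

end ZeroForcing

theorem stmt_5_general (G : SimpleGraph V) (Z : Finset V) (k : ℕ)
    (u v : Fin k → V)
    (hu : Function.Injective u) (huZ : ∀ w, w ∉ Z ↔ ∃ i, u i = w)
    (hv : ∀ i : Fin k,
      (v i ∈ Z ∨ ∃ j : Fin k, j < i ∧ u j = v i) ∧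
      G.Adj (v i) (u i) ∧
      ∀ w, G.Adj (v i) w → w ∉ Z → (∀ j : Fin k, j < i → u j ≠ w) → w = u i)
    (p : ℕ) :
    (closedNbhd G (v '' {i : Fin k | (i : ℕ) < p})).ncard ≤ Z.card + p := by
  have hfin : ((Z : Set V) ∪ u '' {j : Fin k | (j : ℕ) < p}).Finite :=
    Z.finite_toSet.union (Set.toFinite _)
  calc (closedNbhd G (v '' {i : Fin k | (i : ℕ) < p})).ncard
      ≤ ((Z : Set V) ∪ u '' {j : Fin k | (j : ℕ) < p}).ncard :=
        Set.ncard_le_ncard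
          (closedNbhd_forcers_subset hu huZ (fun i => ⟨(hv i).1, (hv i).2.2⟩) p) hfin
    _ ≤ (Z : Set V).ncard + (u '' {j : Fin k | (j : ℕ) < p}).ncard := Set.ncard_union_le _ _
    _ ≤ Z.card + p := by
        rw [Set.ncard_coe_finset]
        exact Nat.add_le_add_left (Set.ncard_image_fin_val_lt_le u p) _

/-- For a zero forcing process with forcing vertices `v 0, …, v (k-1)` and `p ≤ k`,
`|N_G[{v 0, …, v (p-1)}]| ≤ |Z| + p`. -/
theorem stmt_5 [Fintype V] (G : SimpleGraph V) (Z : Finset V) (k : ℕ)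
    (u v : Fin k → V)
    (hu : Function.Injective u) (huZ : ∀ w, w ∉ Z ↔ ∃ i, u i = w)
    (hv : ∀ i : Fin k,
      (v i ∈ Z ∨ ∃ j : Fin k, j < i ∧ u j = v i) ∧
      G.Adj (v i) (u i) ∧
      ∀ w, G.Adj (v i) w → w ∉ Z → (∀ j : Fin k, j < i → u j ≠ w) → w = u i)
    (p : ℕ) (hp : p ≤ k) :
    (closedNbhd G (v '' {i : Fin k | (i : ℕ) < p})).ncard ≤ Z.card + p :=
  stmt_5_general G Z k u v hu huZ hv p
end

section
/- Let G be a graph of girth g ≥ 5, let X ⊆ V(G) with |X| = g−2, and let K_1,…,K_p be the vertex sets of the components of G[X] with p ≥ 3. Then there do not exist two distinct vertices in N_G(X) that both have neighbors in two distinct components K_i and K_j (for the same pair i ≠ j). -/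
open scoped Classical

variable {V : Type*}

/-- The vertex set (in `V`) of a connected component of the induced subgraph `G[X]`. -/
def compVerts (G : SimpleGraph V) (X : Set V)
    (C : (G.induce X).ConnectedComponent) : Set V :=
  {y | ∃ x : X, (G.induce X).connectedComponentMk x = C ∧ (x : V) = y}

/-- `w` has a neighbor in the component `C` of `G[X]`. -/
def touches (G : SimpleGraph V) (X : Set V) (w : V)
    (C : (G.induce X).ConnectedComponent) : Prop :=
  ∃ x : X, (G.induce X).connectedComponentMk x = C ∧ G.Adj w (x : V)

/-!
Each of `u`, `v` has a neighbour in both `C` and `D`; joining these neighbours by paths inside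
`C` and inside `D` closes a cycle `u → C → v → D → u` on at most `|C| + |D| + 2` vertices.
A third component of `G[X]` leaves `|C| + |D| < |X| = g - 2`, so this cycle is shorter than
the girth.
-/

theorem exists_ne_ne_of_three_le_natCard {α : Type*} (h : 3 ≤ Nat.card α) (x y : α) :
    ∃ z, z ≠ x ∧ z ≠ y := by
  have : Finite α := Nat.finite_of_card_ne_zero (by omega)
  exact ENat.exists_ne_ne_of_three_le (by simpa [ENat.card_eq_coe_natCard] using h) x y

namespace SimpleGraph

variable {G : SimpleGraph V}

theorem Walk.IsCycle.length_le_ncard {u : V} {w : G.Walk u u} (hw : w.IsCycle) {S : Set V}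
    (hS : S.Finite) (hwS : ∀ z ∈ w.support, z ∈ S) : w.length ≤ S.ncard := by
  have hsub : (w.support.tail.toFinset : Set V) ⊆ S := fun z hz =>
    hwS z (List.mem_of_mem_tail (List.mem_toFinset.mp hz))
  calc w.length = w.support.tail.length := by simp
    _ = w.support.tail.toFinset.card := (List.toFinset_card_of_nodup hw.support_nodup).symm
    _ = (w.support.tail.toFinset : Set V).ncard := (Set.ncard_coe_finset _).symm
    _ ≤ S.ncard := Set.ncard_le_ncard hsub hS

theorem exists_isCycle_of_disjoint_paths {u v a b c d : V} (huv : u ≠ v)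
    (hua : G.Adj u a) (hbv : G.Adj b v) (hvc : G.Adj v c) (hdu : G.Adj d u)
    {p : G.Walk a b} {q : G.Walk c d} (hp : p.IsPath) (hq : q.IsPath)
    (hpq : p.support.Disjoint q.support) (hup : u ∉ p.support) (huq : u ∉ q.support)
    (hvp : v ∉ p.support) (hvq : v ∉ q.support) :
    ∃ w : G.Walk u u, w.IsCycle ∧
      ∀ z ∈ w.support, z = u ∨ z = v ∨ z ∈ p.support ∨ z ∈ q.support := by
  have hP : (Walk.cons hua (p.concat hbv)).IsPath :=
    (hp.concat hvp hbv).cons (by simpa [Walk.support_concat, huv] using hup)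
  have hQ : (Walk.cons hvc (q.concat hdu)).IsPath :=
    (hq.concat huq hdu).cons (by simpa [Walk.support_concat, huv.symm] using hvq)
  refine ⟨_, hP.isCycle_append hQ ?_ (by simp), ?_⟩
  · simp only [Walk.support_cons, Walk.support_concat, List.tail_cons]
    intro z hzp hzq
    simp only [List.mem_append, List.mem_singleton] at hzp hzq
    rcases hzp with hzp | rfl <;> rcases hzq with hzq | rfl
    exacts [hpq hzp hzq, hup hzp, hvq hzq, huv rfl]
  · intro z hz
    simp only [Walk.support_append, Walk.support_cons, Walk.support_concat, List.tail_cons,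
      List.mem_cons, List.mem_append] at hz
    tauto

end SimpleGraph

section InducedComponents

open SimpleGraph

variable (G : SimpleGraph V) (X : Set V)

theorem val_mem_compVerts_iff {C : (G.induce X).ConnectedComponent} {x : X} :
    (x : V) ∈ compVerts G X C ↔ (G.induce X).connectedComponentMk x = C :=
  ⟨fun ⟨_, hy, hyx⟩ => Subtype.val_injective hyx ▸ hy, fun hx => ⟨x, hx, rfl⟩⟩

theorem compVerts_subset (C : (G.induce X).ConnectedComponent) : compVerts G X C ⊆ X := by
  rintro _ ⟨x, -, rfl⟩
  exact x.2

theorem disjoint_compVerts {C D : (G.induce X).ConnectedComponent} (hCD : C ≠ D) :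
    Disjoint (compVerts G X C) (compVerts G X D) := by
  rw [Set.disjoint_left]
  rintro _ ⟨x, hxC, rfl⟩ hxD
  exact hCD (hxC.symm.trans ((val_mem_compVerts_iff G X).mp hxD))

theorem ncard_compVerts_union_lt [Finite X] {C D E : (G.induce X).ConnectedComponent}
    (hEC : E ≠ C) (hED : E ≠ D) :
    (compVerts G X C ∪ compVerts G X D).ncard < X.ncard := by
  obtain ⟨e, rfl⟩ := E.exists_rep
  refine Set.ncard_lt_ncard ?_ (Set.toFinite X)
  refine Set.ssubset_iff_of_subset (Set.union_subset (compVerts_subset G X C)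
    (compVerts_subset G X D)) |>.mpr ⟨e, e.2, ?_⟩
  rintro (he | he)
  exacts [hEC ((val_mem_compVerts_iff G X).mp he), hED ((val_mem_compVerts_iff G X).mp he)]

theorem exists_isPath_support_subset_compVerts {C : (G.induce X).ConnectedComponent} {x y : X}
    (hx : (G.induce X).connectedComponentMk x = C) (hy : (G.induce X).connectedComponentMk y = C) :
    ∃ p : G.Walk x y, p.IsPath ∧ ∀ z ∈ p.support, z ∈ compVerts G X C := by
  obtain ⟨w⟩ := ConnectedComponent.exact (hx.trans hy.symm)
  have hsupp :
      ∀ z ∈ (w.toPath.1.map (Embedding.induce X).toHom).support, z ∈ compVerts G X C := by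
    simp only [Walk.support_map, List.mem_map]
    rintro _ ⟨z, hz, rfl⟩
    exact (val_mem_compVerts_iff G X).mpr
      ((ConnectedComponent.sound ((w.toPath.1.takeUntil z hz).reachable.symm)).trans hx)
  exact ⟨_, w.toPath.2.map Subtype.val_injective, hsupp⟩

end InducedComponents

theorem stmt_8_general [Fintype V] (G : SimpleGraph V) (g : ℕ)
    (hg : G.girth = (g : ℕ∞))
    (X : Set V) (hX : X.ncard = g - 2)
    (hp : 3 ≤ Nat.card ((G.induce X).ConnectedComponent)) :
    ¬ ∃ u ∈ extNbhd G X, ∃ v ∈ extNbhd G X, u ≠ v ∧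
      ∃ C D : (G.induce X).ConnectedComponent, C ≠ D ∧
        touches G X u C ∧ touches G X u D ∧ touches G X v C ∧ touches G X v D := by
  rintro ⟨u, ⟨huX, -⟩, v, ⟨hvX, -⟩, huv, C, D, hCD,
    ⟨a, ha, hua⟩, ⟨d, hd, hud⟩, ⟨b, hb, hvb⟩, ⟨c, hc, hvc⟩⟩
  obtain ⟨E, hEC, hED⟩ := exists_ne_ne_of_three_le_natCard hp C D
  obtain ⟨p, hpPath, hpC⟩ := exists_isPath_support_subset_compVerts G X ha hb
  obtain ⟨q, hqPath, hqD⟩ := exists_isPath_support_subset_compVerts G X hc hd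
  have hnotin {z : V} (hz : z ∉ X) : z ∉ p.support ∧ z ∉ q.support :=
    ⟨fun h => hz (compVerts_subset G X C (hpC z h)),
      fun h => hz (compVerts_subset G X D (hqD z h))⟩
  obtain ⟨w, hw, hwS⟩ := SimpleGraph.exists_isCycle_of_disjoint_paths huv hua hvb.symm hvc
    hud.symm hpPath hqPath
    (fun z hzp hzq => Set.disjoint_left.mp (disjoint_compVerts G X hCD) (hpC z hzp) (hqD z hzq))
    (hnotin huX).1 (hnotin huX).2 (hnotin hvX).1 (hnotin hvX).2
  have hS : (compVerts G X C ∪ compVerts G X D).ncard < X.ncard :=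
    ncard_compVerts_union_lt G X hEC hED
  set S := compVerts G X C ∪ compVerts G X D
  have hwS' : ∀ z ∈ w.support, z ∈ insert u (insert v S) := fun z hz => by
    simp only [S, Set.mem_insert_iff, Set.mem_union]
    exact (hwS z hz).imp_right (Or.imp_right (Or.imp (hpC z) (hqD z)))
  have hgirth : G.girth ≤ S.ncard + 2 := calc
    G.girth ≤ w.length := G.girth_le_length hw
    _ ≤ (insert u (insert v S)).ncard := hw.length_le_ncard (Set.toFinite _) hwS'
    _ ≤ (insert v S).ncard + 1 := Set.ncard_insert_le _ _
    _ ≤ S.ncard + 2 := by grw [Set.ncard_insert_le]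
  have hg' : G.girth = g := by exact_mod_cast hg
  omega

/-- If `G` has girth `g ≥ 5`, `|X| = g - 2`, and `G[X]` has `p ≥ 3` components,
then no two distinct vertices of `N_G(X)` both have neighbors in the same two
distinct components of `G[X]`. -/
theorem stmt_8 [Fintype V] (G : SimpleGraph V) (g : ℕ)
    (hg : G.girth = (g : ℕ∞)) (hg5 : 5 ≤ g)
    (X : Set V) (hX : X.ncard = g - 2)
    (hp : 3 ≤ Nat.card ((G.induce X).ConnectedComponent)) :
    ¬ ∃ u ∈ extNbhd G X, ∃ v ∈ extNbhd G X, u ≠ v ∧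
      ∃ C D : (G.induce X).ConnectedComponent, C ≠ D ∧
        touches G X u C ∧ touches G X u D ∧ touches G X v C ∧ touches G X v D :=
  stmt_8_general G g hg X hX hp
end

section
/- Let G be a graph of girth g ≥ 5, let X ⊆ V(G) with |X| = g−2 such that G[X] has exactly two components K_1 and K_2. Then at most two vertices of N_G(X) have neighbors in both K_1 and K_2. -/
open scoped Classical

variable {V : Type*}

/-!
Suppose `w₁, w₂, w₃ ∉ X` each have neighbours in both components, of sizes `n_C + n_D = g - 2`.
For two of them, `u` and `v`, a path in `C` between their neighbours there and a path in `D`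
between their neighbours there close up through `u` and `v` to a cycle of length at most
`(n_C - 1) + (n_D - 1) + 4 = g`. As the girth is `g`, every such path in `C` is Hamiltonian in `C`.
But if `n_C ≥ 2`, the neighbours `a₁, a₂, a₃` of the `wᵢ` in `C` cannot be pairwise joined only by
Hamiltonian paths: a Hamiltonian path from `a₁` to `a₂ ≠ a₁` passes through `a₃`, and its initial
segment up to `a₃` is shorter.
-/

lemma Set.exists_fin_embedding_forall_mem {α : Type*} {s : Set α} [Finite s] {n : ℕ}
    (h : n ≤ s.ncard) :
    ∃ w : Fin n ↪ α, ∀ i, w i ∈ s := by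
  have := Fintype.ofFinite s
  obtain ⟨w⟩ := Function.Embedding.nonempty_of_card_le (α := Fin n) (β := s)
    (by rwa [Fintype.card_fin, ← Nat.card_eq_fintype_card, Nat.card_coe_set_eq])
  exact ⟨w.trans (Function.Embedding.subtype _), fun i => (w i).2⟩

namespace SimpleGraph

variable {G : SimpleGraph V} {u v z : V}

lemma Walk.support_subset_supp (p : G.Walk u v) :
    {z | z ∈ p.support} ⊆ (G.connectedComponentMk u).supp := fun z hz =>
  ((ConnectedComponent.mem_supp_iff _ _).mpr (ConnectedComponent.sound
    (p.takeUntil z hz).reachable).symm)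

lemma Walk.IsPath.ncard_support {p : G.Walk u v} (hp : p.IsPath) :
    {z | z ∈ p.support}.ncard = p.length + 1 := by
  rw [← List.coe_toFinset, Set.ncard_coe_finset, List.toFinset_card_of_nodup hp.support_nodup,
    Walk.length_support]

lemma Walk.IsPath.length_add_one_le_ncard_supp [Finite V] {p : G.Walk u v} (hp : p.IsPath) :
    p.length + 1 ≤ (G.connectedComponentMk u).supp.ncard :=
  hp.ncard_support ▸ Set.ncard_le_ncard p.support_subset_supp

lemma Walk.IsPath.mem_support_of_ncard_supp_le [Finite V] {p : G.Walk u v} (hp : p.IsPath)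
    (hlen : (G.connectedComponentMk u).supp.ncard ≤ p.length + 1)
    (hz : z ∈ (G.connectedComponentMk u).supp) : z ∈ p.support := by
  rw [← Set.eq_of_subset_of_ncard_le p.support_subset_supp (hp.ncard_support ▸ hlen)] at hz
  exact hz

lemma ConnectedComponent.exists_isPath_length_add_two_le [Finite V] {c : G.ConnectedComponent}
    (hc : 2 ≤ c.supp.ncard) (a : Fin 3 → V) (ha : ∀ i, a i ∈ c.supp) :
    ∃ i j, i ≠ j ∧ ∃ p : G.Walk (a i) (a j), p.IsPath ∧ p.length + 2 ≤ c.supp.ncard := by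
  have of_eq : ∀ i j, i ≠ j → a i = a j →
      ∃ i j, i ≠ j ∧ ∃ p : G.Walk (a i) (a j), p.IsPath ∧ p.length + 2 ≤ c.supp.ncard :=
    fun i j hij h => ⟨i, j, hij, Walk.nil.copy rfl h, by simp, by simpa using hc⟩
  by_cases h01 : a 0 = a 1
  · exact of_eq 0 1 (by decide) h01
  by_cases h21 : a 2 = a 1
  · exact of_eq 2 1 (by decide) h21
  obtain ⟨p, hp⟩ := (c.reachable_of_mem_supp (ha 0) (ha 1)).exists_isPath
  have hc0 : G.connectedComponentMk (a 0) = c := (c.mem_supp_iff _).mp (ha 0)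
  by_cases hlen : p.length + 2 ≤ c.supp.ncard
  · exact ⟨0, 1, by decide, p, hp, hlen⟩
  have h2 : a 2 ∈ p.support := hp.mem_support_of_ncard_supp_le (by rw [hc0]; omega) (hc0 ▸ ha 2)
  refine ⟨0, 2, by decide, p.takeUntil _ h2, hp.takeUntil h2, ?_⟩
  have := Walk.length_takeUntil_lt_length h2 h21
  have := hc0 ▸ hp.length_add_one_le_ncard_supp
  omega

lemma girth_le_length_add_length_add_four {a a' b b' : V} {p : G.Walk a a'} {q : G.Walk b' b}
    (hp : p.IsPath) (hq : q.IsPath) (hpq : p.support.Disjoint q.support)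
    (hu : u ∉ p.support ++ q.support) (hv : v ∉ p.support ++ q.support) (huv : u ≠ v)
    (hua : G.Adj u a) (hva' : G.Adj a' v) (hvb' : G.Adj v b') (hbu : G.Adj b u) :
    G.girth ≤ p.length + q.length + 4 := by
  simp only [List.mem_append, not_or] at hu hv
  have hP : (Walk.cons hua (p.concat hva')).IsPath :=
    (hp.concat hv.1 hva').cons (by simp [Walk.support_concat, hu.1, huv])
  have hQ : (Walk.cons hvb' (q.concat hbu)).IsPath :=
    (hq.concat hu.2 hbu).cons (by simp [Walk.support_concat, hv.2, huv.symm])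
  have hcycle := hP.isCycle_append hQ (by
    simp only [Walk.support_cons, Walk.support_concat, List.tail_cons, List.disjoint_append_left,
      List.disjoint_append_right, List.disjoint_singleton, List.singleton_disjoint,
      List.mem_singleton, List.mem_append, not_or]
    exact ⟨⟨hpq, hv.2⟩, hu.1, huv⟩) (by simp)
  have := girth_le_length hcycle
  simp only [Walk.length_append, Walk.length_cons, Walk.length_concat] at this
  omega

lemma girth_le_length_add_length_add_four_of_induce {X : Set V} (hu : u ∉ X) (hv : v ∉ X)
    (huv : u ≠ v) {a a' b b' : X} {p : (G.induce X).Walk a a'} {q : (G.induce X).Walk b' b}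
    (hp : p.IsPath) (hq : q.IsPath)
    (hab : (G.induce X).connectedComponentMk a ≠ (G.induce X).connectedComponentMk b)
    (hua : G.Adj u a) (hva' : G.Adj v a') (hvb' : G.Adj v b') (hub : G.Adj u b) :
    G.girth ≤ p.length + q.length + 4 := by
  let e := Embedding.induce (G := G) X
  have hcomp_p : ∀ x ∈ p.support, (G.induce X).connectedComponentMk x =
      (G.induce X).connectedComponentMk a := fun x hx =>
    (ConnectedComponent.mem_supp_iff _ _).mp (p.support_subset_supp hx)
  have hcomp_q : ∀ x ∈ q.support, (G.induce X).connectedComponentMk x =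
      (G.induce X).connectedComponentMk b := fun x hx =>
    ((ConnectedComponent.mem_supp_iff _ _).mp (q.support_subset_supp hx)).trans
      (ConnectedComponent.sound q.reachable)
  have hX : ∀ w ∉ X, w ∉ (p.map e.toHom).support ++ (q.map e.toHom).support := fun w hw => by
    simp only [Walk.support_map, List.mem_append, List.mem_map, not_or, not_exists, not_and]
    exact ⟨fun x _ h => hw (h ▸ x.2), fun x _ h => hw (h ▸ x.2)⟩
  have hpq : (p.map e.toHom).support.Disjoint (q.map e.toHom).support := by
    simp only [Walk.support_map, List.disjoint_left, List.mem_map]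
    rintro _ ⟨x, hx, rfl⟩ ⟨y, hy, hxy⟩
    exact hab ((hcomp_p x hx).symm.trans (Subtype.ext hxy ▸ hcomp_q y hy))
  simpa using girth_le_length_add_length_add_four
    (hp.map e.injective) (hq.map e.injective)
    hpq (hX u hu) (hX v hv) huv hua hva'.symm hvb' hub.symm

lemma ConnectedComponent.ncard_supp_add_ncard_supp [Finite V]
    (h : Nat.card G.ConnectedComponent = 2) {C D : G.ConnectedComponent} (hCD : C ≠ D) :
    C.supp.ncard + D.supp.ncard = Nat.card V := by
  obtain ⟨E, -, huniq⟩ := (Nat.card_eq_two_iff' C).mp h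
  have hcover : C.supp ∪ D.supp = Set.univ := Set.eq_univ_of_forall fun x => by
    by_cases hx : G.connectedComponentMk x = C
    · exact Or.inl hx
    · exact Or.inr ((huniq _ hx).trans (huniq D hCD.symm).symm)
  rw [← Set.ncard_union_eq (G.pairwise_disjoint_supp_connectedComponent hCD), hcover,
    Set.ncard_univ]

lemma ncard_supp_le_length_add_one {X : Set V} [Finite X] {C D : (G.induce X).ConnectedComponent}
    (hCD : C ≠ D) (hgirth : C.supp.ncard + D.supp.ncard + 2 ≤ G.girth)
    (hu : u ∉ X) (hv : v ∉ X) (huv : u ≠ v) (huD : touches G X u D) (hvD : touches G X v D)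
    {a a' : X} (ha : a ∈ C.supp) (hua : G.Adj u a) (hva' : G.Adj v a')
    {p : (G.induce X).Walk a a'} (hp : p.IsPath) : C.supp.ncard ≤ p.length + 1 := by
  obtain ⟨b, rfl, hub⟩ := huD
  obtain ⟨b', hb', hvb'⟩ := hvD
  obtain ⟨q, hq⟩ := (ConnectedComponent.exact hb').exists_isPath
  have hcycle := girth_le_length_add_length_add_four_of_induce hu hv huv hp hq
    (fun h => hCD (((C.mem_supp_iff a).mp ha).symm.trans h)) hua hva' hvb' hub
  have hq_len := hb' ▸ hq.length_add_one_le_ncard_supp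
  omega

end SimpleGraph

open SimpleGraph

/-- If `G` has girth `g ≥ 5`, `|X| = g - 2`, and `G[X]` has exactly two
components, then at most two vertices of `N_G(X)` have neighbors in both of them. -/
theorem stmt_9 [Fintype V] (G : SimpleGraph V) (g : ℕ)
    (hg : G.girth = (g : ℕ∞)) (hg5 : 5 ≤ g)
    (X : Set V) (hX : X.ncard = g - 2)
    (hp : Nat.card ((G.induce X).ConnectedComponent) = 2)
    (C D : (G.induce X).ConnectedComponent) (hCD : C ≠ D) :
    {v ∈ extNbhd G X | touches G X v C ∧ touches G X v D}.ncard ≤ 2 := by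
  have hgirth : G.girth = g := by exact_mod_cast hg
  have hsize : C.supp.ncard + D.supp.ncard + 2 = g := by
    have := ConnectedComponent.ncard_supp_add_ncard_supp hp hCD
    rw [Nat.card_coe_set_eq] at this
    omega
  by_contra! hT
  obtain ⟨w, hw⟩ := Set.exists_fin_embedding_forall_mem hT
  have hwX : ∀ i, w i ∉ X := fun i => (hw i).1.1
  have hwC : ∀ i, touches G X (w i) C := fun i => (hw i).2.1
  have hwD : ∀ i, touches G X (w i) D := fun i => (hw i).2.2
  clear hT hw
  wlog hC : 2 ≤ C.supp.ncard generalizing C D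
  · exact this D C hCD.symm (by omega) hwD hwC (by omega)
  choose a haC hwa using hwC
  obtain ⟨i, j, hij, p, hpath, hlen⟩ := C.exists_isPath_length_add_two_le hC a haC
  have := ncard_supp_le_length_add_one hCD (hgirth ▸ hsize.le) (hwX i) (hwX j)
    (w.injective.ne hij) (hwD i) (hwD j) (haC i) (hwa i) (hwa j) hpath
  omega
end

section
/- Let p ≥ 2, f ≥ 2p−1, and q ≥ 0 be integers with q ≤ f, and suppose p + q ≥ 2·∑_{i=0}^{⌈p/2⌉} (2(f+q)/(p+q) − 1)^i. Then (1 + 2(f−p)/(f+p))^(⌈p/2⌉+1) ≤ f − p + 1. -/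
/-!
Put `y = 2(f+q)/(p+q) - 1 = 1 + 2(f-p)/(p+q)`. Multiplying the hypothesis by `y - 1 ≥ 0` and
using `(y - 1)·∑_{i<n} y^i = y^n - 1` gives `y^n ≤ 1 + (y-1)(p+q)/2 = f - p + 1`, and `q ≤ f`
makes the base `1 + 2(f-p)/(f+p)` at most `y`.
-/

open Finset

theorem pow_le_one_add_mul_of_two_mul_geom_sum_le {α : Type*} [Field α] [LinearOrder α]
    [IsStrictOrderedRing α] {y c : α} (hy : 1 ≤ y) {n : ℕ}
    (h : 2 * ∑ i ∈ range n, y ^ i ≤ c) : y ^ n ≤ 1 + (y - 1) * c / 2 := by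
  have hsum : (∑ i ∈ range n, y ^ i) * (y - 1) ≤ c / 2 * (y - 1) :=
    mul_le_mul_of_nonneg_right (by linarith) (sub_nonneg.mpr hy)
  rw [geom_sum_mul] at hsum
  linarith

theorem one_add_two_mul_sub_div_add_pow_le {p f q : ℝ} (hpq : 0 < p + q) (hpf : p ≤ f)
    (hqf : q ≤ f) (n : ℕ) (h : 2 * ∑ i ∈ range n, (2 * (f + q) / (p + q) - 1) ^ i ≤ p + q) :
    (1 + 2 * (f - p) / (f + p)) ^ n ≤ f - p + 1 := by
  have hy : 2 * (f + q) / (p + q) - 1 = 1 + 2 * (f - p) / (p + q) := by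
    field_simp
    ring
  rw [hy] at h
  have hbase : 1 + 2 * (f - p) / (f + p) ≤ 1 + 2 * (f - p) / (p + q) := by
    gcongr 1 + ?_
    exact div_le_div_of_nonneg_left (by linarith) hpq (by linarith)
  have hbase_nonneg : 0 ≤ 1 + 2 * (f - p) / (f + p) := by
    have : 0 ≤ 2 * (f - p) / (f + p) := div_nonneg (by linarith) (by linarith)
    linarith
  have hy_ge : 1 ≤ 1 + 2 * (f - p) / (p + q) := by
    have : 0 ≤ 2 * (f - p) / (p + q) := div_nonneg (by linarith) hpq.le
    linarith
  calc (1 + 2 * (f - p) / (f + p)) ^ n ≤ (1 + 2 * (f - p) / (p + q)) ^ n := by gcongr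
    _ ≤ 1 + (1 + 2 * (f - p) / (p + q) - 1) * (p + q) / 2 :=
      pow_le_one_add_mul_of_two_mul_geom_sum_le hy_ge h
    _ = f - p + 1 := by
      field_simp
      ring

/-- If `p ≥ 2`, `f ≥ 2p-1`, `0 ≤ q ≤ f` and
`p + q ≥ 2·∑_{i=0}^{⌈p/2⌉} (2(f+q)/(p+q) - 1)^i`, then
`(1 + 2(f-p)/(f+p))^(⌈p/2⌉+1) ≤ f - p + 1`. -/
theorem stmt_19 (p f q : ℕ) (hp : 2 ≤ p) (hf : 2 * p - 1 ≤ f) (hq : q ≤ f)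
    (h : 2 * ∑ i ∈ Finset.range (⌈(p : ℝ) / 2⌉₊ + 1),
        (2 * ((f : ℝ) + q) / ((p : ℝ) + q) - 1) ^ i ≤ ((p : ℝ) + q)) :
    (1 + 2 * ((f : ℝ) - p) / ((f : ℝ) + p)) ^ (⌈(p : ℝ) / 2⌉₊ + 1) ≤ (f : ℝ) - p + 1 := by
  have hpf : p ≤ f := by omega
  have hpq : (0 : ℝ) < p + q :=
    add_pos_of_pos_of_nonneg (by exact_mod_cast (by omega : 0 < p)) q.cast_nonneg
  exact one_add_two_mul_sub_div_add_pow_le hpq (by exact_mod_cast hpf) (by exact_mod_cast hq) _ h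
end
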